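/- For every ε > 0, m > 0, and each fixed λ ∈ ℤ₊, the series Σ_{μ=0}^∞ b₁(λ,μ,m,ε) converges to (−1)^(λ+1)·(1+√(m²ε²+1))/(mε), and the series Σ_{μ=0}^∞ b₂(λ,μ,m,ε) converges to (−1)^(λ+1). -/

import Mathlib

noncomputable section

/-- The `i`-th move of a checker path encoded as `f : Fin n → Bool`
(`true` = upwards-right move `(ε,ε)`, `false` = upwards-left move `(−ε,ε)`);
out-of-range indices default to `true`. -/
def fcStep {n : ℕ} (f : Fin n → Bool) (i : ℕ) : Bool :=
  if h : i < n then f ⟨i, h⟩ else true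

/-- The number of turns of the checker path `f`. -/
def fcTurns {n : ℕ} (f : Fin n → Bool) : ℕ :=
  ((Finset.range (n - 1)).filter fun i => fcStep f i ≠ fcStep f (i + 1)).card

/-- The position (in units of `ε`) of the checker path `f` after `i` moves,
starting from the origin. -/
def fcPos {n : ℕ} (f : Fin n → Bool) (i : ℕ) : ℤ :=
  ∑ j ∈ Finset.range i, (if fcStep f j then (1 : ℤ) else -1)

/-- Checker paths from `(0,0)` to `(εx, εn)` whose first step is to `(ε,ε)`. -/
def fcPaths (n : ℕ) (x : ℤ) : Finset (Fin n → Bool) :=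
  Finset.univ.filter fun f =>
    (∀ i : Fin n, (i : ℕ) = 0 → f i = true) ∧ fcPos f n = x

/-- The amplitude `a(εx, εn, m, ε)`. -/
def fcAmp (m ε : ℝ) (x : ℤ) (n : ℕ) : ℂ :=
  (((1 + m ^ 2 * ε ^ 2) ^ ((1 - (n : ℝ)) / 2) : ℝ) : ℂ) * Complex.I *
    ∑ f ∈ fcPaths n x, (-Complex.I * (m * ε)) ^ fcTurns f

/-- The probability `P(εx, εn, m, ε)` to find the electron at `(εx, εn)`. -/
def fcP (m ε : ℝ) (x : ℤ) (n : ℕ) : ℝ := ‖fcAmp m ε x n‖ ^ 2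

/-- `b(λ,μ,m,ε) := a(ε(λ−μ), ε(λ+μ), m, ε)`. -/
def fcB (m ε : ℝ) (lam mu : ℕ) : ℂ := fcAmp m ε ((lam : ℤ) - (mu : ℤ)) (lam + mu)

/-!
Split the path sum `∑ (-i m ε) ^ turns` according to the last move: `R λ μ` and `L λ μ` sum over
the paths with `λ` right and `μ` left moves that end with a right, resp. left, move. Appending
one move gives `R (λ+1) μ = R λ μ + z L λ μ` and `L λ (μ+1) = L λ μ + z R λ μ` with
`z = -i m ε`, and the normalising factor of `b(λ, μ)` is `q ^ (λ + μ - 1)` with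
`q = (1 + m²ε²)^(-1/2) < 1`. In the generating functions `∑_μ q^μ R λ μ` and `∑_μ q^μ L λ μ`
the second recursion is contracting, so `L` inherits summability from `R` and
`∑ q^μ L = q z / (1 - q) ∑ q^μ R`; the first one then multiplies `∑ q^μ R` by
`1 + q z² / (1 - q) = -1 / q` at each step in `λ`, starting from `1` at `λ = 1`. Hence
`∑_μ b(λ, μ) = i (-1)^(λ-1) (1 + q z / (1 - q)) = (-1)^(λ+1) ((1 + √(m²ε² + 1)) / (m ε) + i)`.
-/

open Finset

lemma fcStep_snoc {n : ℕ} (f : Fin n → Bool) (b : Bool) (i : ℕ) :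
    fcStep (Fin.snoc f b : Fin (n + 1) → Bool) i = if i = n then b else fcStep f i := by
  unfold fcStep
  rcases lt_trichotomy i n with h | rfl | h
  · simp [h, h.ne, Nat.lt_succ_of_lt h, Fin.snoc]
  · simp [Fin.snoc]
  · simp [h.ne', h.not_gt, show ¬ i < n + 1 by omega]

lemma fcPos_succ {n : ℕ} (f : Fin n → Bool) (i : ℕ) :
    fcPos f (i + 1) = fcPos f i + if fcStep f i then 1 else -1 :=
  sum_range_succ _ _

lemma fcPos_snoc_last {n : ℕ} (f : Fin n → Bool) (b : Bool) :
    fcPos (Fin.snoc f b : Fin (n + 1) → Bool) (n + 1) = fcPos f n + if b then 1 else -1 := by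
  rw [fcPos_succ, fcStep_snoc, if_pos rfl]
  congr 1
  exact sum_congr rfl fun j hj => by rw [fcStep_snoc, if_neg (mem_range.1 hj).ne]

lemma fcTurns_snoc {k : ℕ} (f : Fin (k + 1) → Bool) (b : Bool) :
    fcTurns (Fin.snoc f b : Fin (k + 2) → Bool) =
      fcTurns f + if fcStep f k = b then 0 else 1 := by
  simp only [fcTurns, card_filter, Nat.add_sub_cancel, sum_range_succ, fcStep_snoc,
    if_neg (Nat.succ_ne_self k).symm, ↓reduceIte]
  congr 1
  · refine sum_congr rfl fun i hi => ?_
    have hik := mem_range.1 hi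
    rw [if_neg (show i ≠ k + 1 by omega), if_neg (show i + 1 ≠ k + 1 by omega)]
  · cases fcStep f k <;> cases b <;> rfl

lemma fcPos_le {n : ℕ} (f : Fin n → Bool) (i : ℕ) : fcPos f i ≤ i := by
  induction i with
  | zero => simp [fcPos]
  | succ i ih => rw [fcPos_succ]; split <;> omega

lemma two_sub_le_fcPos {n : ℕ} {f : Fin n → Bool} (hf : fcStep f 0 = true) {i : ℕ} (hi : 1 ≤ i) :
    2 - (i : ℤ) ≤ fcPos f i := by
  induction i, hi using Nat.le_induction with
  | base => simp [fcPos, hf]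
  | succ i _ ih => rw [fcPos_succ]; push_cast; split <;> omega

lemma mem_fcPaths {n : ℕ} {x : ℤ} {f : Fin n → Bool} :
    f ∈ fcPaths n x ↔ fcStep f 0 = true ∧ fcPos f n = x := by
  cases n with
  | zero => simp only [fcPaths, mem_filter, mem_univ, true_and, fcStep]; simp
  | succ n => simp [fcPaths, fcStep]

def snocMove (n : ℕ) (b : Bool) : (Fin n → Bool) ↪ (Fin (n + 1) → Bool) :=
  ⟨(Fin.snoc · b), Fin.snoc_left_injective (α := fun _ => Bool) b⟩

lemma filter_fcPaths_succ {n : ℕ} (hn : 1 ≤ n) (x : ℤ) (b : Bool) :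
    {f ∈ fcPaths (n + 1) x | fcStep f n = b} =
      (fcPaths n (x - if b then 1 else -1)).map (snocMove n b) := by
  ext f
  obtain ⟨g, c, rfl⟩ : ∃ g c, f = Fin.snoc g c := ⟨Fin.init f, _, (Fin.snoc_init_self f).symm⟩
  simp only [mem_filter, mem_map, mem_fcPaths, snocMove, Function.Embedding.coeFn_mk,
    Fin.snoc_inj, fcStep_snoc, fcPos_snoc_last, if_neg (by omega : 0 ≠ n), ↓reduceIte]
  constructor
  · rintro ⟨⟨h0, hx⟩, rfl⟩
    exact ⟨g, ⟨h0, by omega⟩, rfl, rfl⟩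
  · rintro ⟨g, ⟨h0, hx⟩, rfl, rfl⟩
    exact ⟨⟨h0, by omega⟩, rfl⟩

def turnSum (z : ℂ) (n : ℕ) (x : ℤ) (b : Bool) : ℂ :=
  ∑ f ∈ fcPaths n x with fcStep f (n - 1) = b, z ^ fcTurns f

lemma sum_fcPaths_eq_turnSum_add (z : ℂ) (n : ℕ) (x : ℤ) :
    ∑ f ∈ fcPaths n x, z ^ fcTurns f = turnSum z n x true + turnSum z n x false := by
  simp only [turnSum, ← Bool.not_eq_true]
  exact (sum_filter_add_sum_filter_not _ _ _).symm

lemma turnSum_succ (z : ℂ) {n : ℕ} (hn : 1 ≤ n) (x : ℤ) (b : Bool) :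
    turnSum z (n + 1) x b =
      turnSum z n (x - if b then 1 else -1) b + z * turnSum z n (x - if b then 1 else -1) !b := by
  obtain ⟨k, rfl⟩ := Nat.exists_eq_add_of_le' hn
  simp only [turnSum, Nat.add_sub_cancel]
  rw [filter_fcPaths_succ hn, sum_map, mul_sum,
    ← sum_filter_add_sum_filter_not _ (fun f => fcStep f k = b)]
  congr 1
  · refine sum_congr rfl fun f hf => ?_
    simp [snocMove, fcTurns_snoc, (mem_filter.1 hf).2]
  · refine sum_congr (filter_congr fun f _ => by cases fcStep f k <;> cases b <;> simp)
      fun f hf => ?_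
    simp [snocMove, fcTurns_snoc, (mem_filter.1 hf).2, pow_succ, mul_comm]

lemma turnSum_eq_zero_of_lt {n : ℕ} (hn : 1 ≤ n) {x : ℤ} (hx : x < 2 - n) (z : ℂ) (b : Bool) :
    turnSum z n x b = 0 := by
  refine sum_eq_zero fun f hf => absurd hx ?_
  obtain ⟨⟨h0, rfl⟩, -⟩ := mem_filter.1 hf |>.imp_left mem_fcPaths.1
  exact not_lt.2 (two_sub_le_fcPos h0 hn)

lemma turnSum_self_false (z : ℂ) (n : ℕ) : turnSum z n n false = 0 := by
  refine sum_eq_zero fun f hf => ?_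
  obtain ⟨⟨h0, hn⟩, hlast⟩ := mem_filter.1 hf |>.imp_left mem_fcPaths.1
  cases n with
  | zero => simp_all
  | succ k =>
    have := fcPos_le f k
    rw [Nat.add_sub_cancel] at hlast
    rw [fcPos_succ, hlast] at hn
    push_cast at hn
    omega

/-- `turnSum` over the paths with `lam` moves to the right and `mu` moves to the left. -/
def endSum (z : ℂ) (b : Bool) (lam mu : ℕ) : ℂ := turnSum z (lam + mu) ((lam : ℤ) - mu) b

lemma endSum_true_succ_left (z : ℂ) {lam mu : ℕ} (h : 1 ≤ lam + mu) :
    endSum z true (lam + 1) mu = endSum z true lam mu + z * endSum z false lam mu := by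
  rw [endSum, Nat.add_right_comm, turnSum_succ z h]
  simp [endSum, sub_right_comm _ (mu : ℤ) 1]

lemma endSum_false_succ_right (z : ℂ) {lam mu : ℕ} (h : 1 ≤ lam + mu) :
    endSum z false lam (mu + 1) = endSum z false lam mu + z * endSum z true lam mu := by
  rw [endSum, ← Nat.add_assoc, turnSum_succ z h]
  simp [endSum, sub_add_eq_sub_sub]

lemma endSum_false_zero (z : ℂ) (lam : ℕ) : endSum z false lam 0 = 0 := by
  simpa [endSum] using turnSum_self_false z lam

lemma endSum_true_one (z : ℂ) (mu : ℕ) : endSum z true 1 mu = if mu = 0 then 1 else 0 := by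
  cases mu with
  | zero =>
    have hpaths : {f ∈ fcPaths 1 1 | fcStep f 0 = true} = {fun _ => true} := by decide
    simp [endSum, turnSum, hpaths, fcTurns]
  | succ k =>
    rw [endSum, Nat.add_comm, turnSum_succ z (by omega)]
    simp [turnSum_eq_zero_of_lt]

lemma summable_of_succ_le_add_mul {a b : ℕ → ℝ} {q : ℝ} (ha : Summable a) (ha0 : ∀ n, 0 ≤ a n)
    (hb0 : ∀ n, 0 ≤ b n) (hq1 : q < 1) (h : ∀ n, b (n + 1) ≤ a n + q * b n) :
    Summable b := by
  refine summable_of_sum_range_le hb0 (c := (b 0 + ∑' n, a n) / (1 - q)) fun N => ?_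
  have hshift : ∑ i ∈ range (N + 1), b i = b 0 + ∑ i ∈ range N, b (i + 1) := by
    rw [sum_range_succ', add_comm]
  have hstep : ∑ i ∈ range N, b (i + 1) ≤ ∑ i ∈ range N, a i + q * ∑ i ∈ range N, b i := by
    rw [mul_sum, ← sum_add_distrib]
    exact sum_le_sum fun i _ => h i
  have ha_le : ∑ i ∈ range N, a i ≤ ∑' n, a n := ha.sum_le_tsum _ fun i _ => ha0 i
  have hmono : ∑ i ∈ range N, b i ≤ ∑ i ∈ range (N + 1), b i := by
    rw [sum_range_succ]
    linarith [hb0 N]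
  rw [le_div_iff₀ (by linarith)]
  linarith

lemma hasSum_of_succ_eq_mul_add {𝕜 : Type*} [RCLike 𝕜] {u v : ℕ → 𝕜} {c q G : 𝕜}
    (hu : HasSum u G) (hq : ‖q‖ < 1) (hv0 : v 0 = 0) (hv : ∀ n, v (n + 1) = c * u n + q * v n) :
    HasSum v (c * G / (1 - q)) := by
  have hsum : Summable v := by
    refine summable_norm_iff.1 <| summable_of_succ_le_add_mul
      ((summable_norm_iff.2 hu.summable).mul_left ‖c‖) (fun n => by positivity)
      (fun n => norm_nonneg _) hq fun n => ?_
    rw [hv, ← norm_mul, ← norm_mul]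
    exact norm_add_le _ _
  obtain ⟨V, hV⟩ := hsum
  have hshift : HasSum (fun n => v (n + 1)) V := by
    simpa [hv0] using (hasSum_nat_add_iff' 1).2 hV
  have hrec : V = c * G + q * V := by
    refine hshift.unique ?_
    simp_rw [hv]
    exact (hu.mul_left c).add (hV.mul_left q)
  have hq1 : 1 - q ≠ 0 := sub_ne_zero.2 fun h => by simp [← h] at hq
  convert hV using 1
  rw [div_eq_iff hq1]
  linear_combination -hrec

section GeneratingFunction

variable (z : ℂ) {q : ℂ} (hq : ‖q‖ < 1)
include hq

lemma hasSum_endSum_false {lam : ℕ} (hlam : 1 ≤ lam) {G : ℂ}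
    (hG : HasSum (fun mu => q ^ mu * endSum z true lam mu) G) :
    HasSum (fun mu => q ^ mu * endSum z false lam mu) (q * z * G / (1 - q)) :=
  hasSum_of_succ_eq_mul_add hG hq (by simp [endSum_false_zero]) fun mu => by
    rw [endSum_false_succ_right z (by omega)]
    ring

lemma hasSum_endSum_true {lam : ℕ} (hlam : 1 ≤ lam) :
    HasSum (fun mu => q ^ mu * endSum z true lam mu) ((1 + q * z ^ 2 / (1 - q)) ^ (lam - 1)) := by
  induction lam, hlam using Nat.le_induction with
  | base =>
    convert hasSum_ite_eq 0 (1 : ℂ) using 1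
    · funext mu
      rw [endSum_true_one]
      split_ifs with h <;> simp [h]
    · simp
  | succ lam hlam ih =>
    convert ih.add ((hasSum_endSum_false z hq hlam ih).mul_left z) using 1
    · funext mu
      rw [endSum_true_succ_left z (by omega)]
      ring
    · rw [show lam + 1 - 1 = lam - 1 + 1 by omega, pow_succ]
      ring

lemma hasSum_endSum {lam : ℕ} (hlam : 1 ≤ lam) :
    HasSum (fun mu => q ^ mu * (endSum z true lam mu + endSum z false lam mu))
      ((1 + q * z / (1 - q)) * (1 + q * z ^ 2 / (1 - q)) ^ (lam - 1)) := by
  have hG := hasSum_endSum_true z hq hlam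
  convert hG.add (hasSum_endSum_false z hq hlam hG) using 1
  · funext mu
    ring
  · ring

end GeneratingFunction

lemma rpow_one_sub_div_two {x : ℝ} (hx : 0 < x) {n : ℕ} (hn : 1 ≤ n) :
    x ^ ((1 - (n : ℝ)) / 2) = (√x)⁻¹ ^ (n - 1) := by
  rw [show (1 - (n : ℝ)) / 2 = 1 / 2 * -((n - 1 : ℕ) : ℝ) by push_cast [Nat.cast_sub hn]; ring,
    Real.rpow_mul hx.le, ← Real.sqrt_eq_rpow, Real.rpow_neg (Real.sqrt_nonneg x),
    Real.rpow_natCast, inv_pow]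

lemma fcB_eq_endSum (m ε : ℝ) {lam : ℕ} (hlam : 1 ≤ lam) (mu : ℕ) :
    let q : ℝ := (√(m ^ 2 * ε ^ 2 + 1))⁻¹
    let z : ℂ := -Complex.I * (m * ε : ℝ)
    fcB m ε lam mu =
      Complex.I * q ^ (lam - 1) * (q ^ mu * (endSum z true lam mu + endSum z false lam mu)) := by
  rw [fcB, fcAmp, sum_fcPaths_eq_turnSum_add, add_comm (1 : ℝ),
    rpow_one_sub_div_two (by positivity) (by omega), show lam + mu - 1 = lam - 1 + mu by omega]
  simp only [endSum]
  push_cast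
  ring

lemma one_add_inv_mul_div_one_sub_inv {a s : ℂ} (hs : s ^ 2 = 1 + a ^ 2) (ha : a ≠ 0) (hs0 : s ≠ 0)
    (hs1 : s ≠ 1) :
    1 + s⁻¹ * (-Complex.I * a) ^ 2 / (1 - s⁻¹) = -s ∧
      Complex.I * (1 + s⁻¹ * (-Complex.I * a) / (1 - s⁻¹)) = (1 + s) / a + Complex.I := by
  have hs1' : s - 1 ≠ 0 := sub_ne_zero.2 hs1
  constructor
  · field_simp
    linear_combination hs + a ^ 2 * Complex.I_sq
  · field_simp
    linear_combination -hs - a ^ 2 * Complex.I_sq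

lemma hasSum_fcB (m ε : ℝ) (hε : 0 < ε) (hm : 0 < m) {lam : ℕ} (hlam : 1 ≤ lam) :
    HasSum (fcB m ε lam)
      (((-1) ^ (lam + 1) : ℝ) * (((1 + √(m ^ 2 * ε ^ 2 + 1)) / (m * ε) : ℝ) + Complex.I)) := by
  rw [show fcB m ε lam = _ from funext fun mu => fcB_eq_endSum m ε hlam mu]
  set a := m * ε
  set s := √(m ^ 2 * ε ^ 2 + 1) with hs
  have ha0 : 0 < a := mul_pos hm hε
  have hs2 : s ^ 2 = 1 + a ^ 2 := by rw [hs, Real.sq_sqrt (by positivity)]; ring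
  have hs1 : 1 < s := by nlinarith [Real.sqrt_nonneg (m ^ 2 * ε ^ 2 + 1)]
  have hq : ‖((s⁻¹ : ℝ) : ℂ)‖ < 1 := by
    rw [Complex.norm_real, Real.norm_eq_abs, abs_inv, abs_of_pos (by linarith)]
    exact inv_lt_one_of_one_lt₀ hs1
  have hs0 : (s : ℂ) ≠ 0 := by exact_mod_cast (by linarith : s ≠ 0)
  obtain ⟨hR, hI⟩ := one_add_inv_mul_div_one_sub_inv (a := a) (by exact_mod_cast hs2)
    (by exact_mod_cast ha0.ne') hs0 (by exact_mod_cast hs1.ne')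
  have hsign : (-1 : ℂ) ^ (lam + 1) = ((s : ℂ)⁻¹ * -s) ^ (lam - 1) := by
    obtain ⟨k, rfl⟩ := Nat.exists_eq_add_of_le' hlam
    rw [mul_neg, inv_mul_cancel₀ hs0, Nat.add_sub_cancel]
    ring
  convert (hasSum_endSum _ hq hlam).mul_left (Complex.I * ((s⁻¹ : ℝ) : ℂ) ^ (lam - 1)) using 1
  · rfl
  push_cast
  rw [hR, ← hI, hsign]
  ring

/-- For fixed `λ ∈ ℤ₊`, the series `Σ_{μ=0}^∞ b₁(λ,μ,m,ε)` and `Σ_{μ=0}^∞ b₂(λ,μ,m,ε)`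
converge to `(−1)^(λ+1)(1+√(m²ε²+1))/(mε)` and `(−1)^(λ+1)`. -/
theorem stmt7 (m ε : ℝ) (hε : 0 < ε) (hm : 0 < m) (lam : ℕ) (hlam : 1 ≤ lam) :
    HasSum (fun mu : ℕ => (fcB m ε lam mu).re)
      ((-1 : ℝ) ^ (lam + 1) * ((1 + Real.sqrt (m ^ 2 * ε ^ 2 + 1)) / (m * ε))) ∧
    HasSum (fun mu : ℕ => (fcB m ε lam mu).im) ((-1 : ℝ) ^ (lam + 1)) := by
  simpa only [Complex.re_ofReal_mul, Complex.im_ofReal_mul, Complex.add_re, Complex.add_im,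
    Complex.ofReal_re, Complex.ofReal_im, Complex.I_re, Complex.I_im, add_zero, zero_add, mul_one]
    using (Complex.hasSum_iff _ _).1 (hasSum_fcB m ε hε hm hlam)
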